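/- Let Γ_1, Γ_2 ⊆ ℕ_∞^n be disjoint multicomplexes with F(Γ_2) ⊆ {0,∞}^n. If Γ_1 and Γ_2 are k-decomposable, then the join Γ_1·Γ_2 is k-decomposable. -/

import Mathlib

open MvPolynomial

noncomputable section

namespace Arxiv1703

variable {K : Type*} [Field K] {σ : Type*}

/-- `I` is a monomial ideal: generated by a set of monomials. -/
def IsMonomialIdeal (I : Ideal (MvPolynomial σ K)) : Prop :=
  ∃ G : Set (σ →₀ ℕ),
    I = Ideal.span ((fun a => (monomial a 1 : MvPolynomial σ K)) '' G)

/-- `ass I = Ass (S/I)`, the associated primes of `S/I`. -/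
def ass (I : Ideal (MvPolynomial σ K)) : Set (Ideal (MvPolynomial σ K)) :=
  associatedPrimes (MvPolynomial σ K) (MvPolynomial σ K ⧸ I)

/-- the minimal members (under inclusion) of a set of ideals. -/
def minSet (A : Set (Ideal (MvPolynomial σ K))) : Set (Ideal (MvPolynomial σ K)) :=
  {P | P ∈ A ∧ ∀ Q ∈ A, Q ≤ P → Q = P}

/-- `u` is a pretty cleaner monomial of `I`. -/
def IsPrettyCleaner (I : Ideal (MvPolynomial σ K)) (u : MvPolynomial σ K) : Prop :=
  ∀ P ∈ ass (I.colon (Ideal.span {u})), ∀ Q ∈ ass (I ⊔ Ideal.span {u}), P ≤ Q → P = Q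

/-- `u` is a cleaner monomial of `I`: `min(ass(I + Su)) ⊆ min(ass I)`. -/
def IsCleaner (I : Ideal (MvPolynomial σ K)) (u : MvPolynomial σ K) : Prop :=
  minSet (ass (I ⊔ Ideal.span {u})) ⊆ minSet (ass I)

/-- `I` is pretty `k`-clean (well-founded recursive definition, as inductive predicate). -/
inductive PrettyKClean (k : ℕ) : Ideal (MvPolynomial σ K) → Prop
  | prime (I : Ideal (MvPolynomial σ K)) (h : I.IsPrime) : PrettyKClean k I
  | step (I : Ideal (MvPolynomial σ K)) (a : σ →₀ ℕ) (ha : a ≠ 0)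
      (hu : (monomial a 1 : MvPolynomial σ K) ∉ I)
      (hsupp : a.support.card ≤ k + 1)
      (hcl : IsPrettyCleaner I (monomial a 1))
      (h1 : PrettyKClean k (I.colon (Ideal.span {(monomial a 1 : MvPolynomial σ K)})))
      (h2 : PrettyKClean k (I ⊔ Ideal.span {monomial a 1})) : PrettyKClean k I

/-- `I` is `k`-clean. -/
inductive KClean (k : ℕ) : Ideal (MvPolynomial σ K) → Prop
  | prime (I : Ideal (MvPolynomial σ K)) (h : I.IsPrime) : KClean k I
  | step (I : Ideal (MvPolynomial σ K)) (a : σ →₀ ℕ) (ha : a ≠ 0)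
      (hu : (monomial a 1 : MvPolynomial σ K) ∉ I)
      (hne : ass I = I.minimalPrimes)
      (hsupp : a.support.card ≤ k + 1)
      (hcl : IsCleaner I (monomial a 1))
      (h1 : KClean k (I.colon (Ideal.span {(monomial a 1 : MvPolynomial σ K)})))
      (h2 : KClean k (I ⊔ Ideal.span {monomial a 1})) : KClean k I

/-- `I` is pretty clean: it admits a pretty clean prime filtration by monomial ideals. -/
def IsPrettyClean (I : Ideal (MvPolynomial σ K)) : Prop :=
  ∃ (r : ℕ) (c : Fin (r + 1) → Ideal (MvPolynomial σ K))
    (P : Fin r → Ideal (MvPolynomial σ K)),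
    c 0 = I ∧ c (Fin.last r) = ⊤ ∧
    (∀ i, IsMonomialIdeal (c i)) ∧
    (∀ i : Fin r, c i.castSucc < c i.succ) ∧
    (∀ i : Fin r, (P i).IsPrime) ∧
    (∀ i : Fin r, Nonempty
      ((↥(c i.succ) ⧸ Submodule.comap (Submodule.subtype (c i.succ)) (c i.castSucc))
        ≃ₗ[MvPolynomial σ K] (MvPolynomial σ K ⧸ P i))) ∧
    (∀ i j : Fin r, i < j → P i ≤ P j → P i = P j)

/-! ### Multicomplexes -/

variable {ι : Type*}

/-- `Γ ⊆ ℕ∞^ι` is a multicomplex. -/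
def IsMulticomplex (Γ : Set (ι → ENat)) : Prop :=
  (∀ a ∈ Γ, ∀ b ≤ a, b ∈ Γ) ∧
  (∀ a ∈ Γ, ∃ m ∈ Γ, a ≤ m ∧ ∀ c ∈ Γ, m ≤ c → m = c)

/-- `M(Γ)`, the maximal elements of `Γ`. -/
def maxElts (Γ : Set (ι → ENat)) : Set (ι → ENat) :=
  {m | m ∈ Γ ∧ ∀ c ∈ Γ, m ≤ c → m = c}

def infpt (a : ι → ENat) : Set ι := {i | a i = ⊤}
def fpt (a : ι → ENat) : Set ι := {i | a i ≠ ⊤}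
def fptStar (a : ι → ENat) : Set ι := {i | a i ≠ 0 ∧ a i ≠ ⊤}

/-- the facets of `Γ`. -/
def facets (Γ : Set (ι → ENat)) : Set (ι → ENat) :=
  {a | a ∈ Γ ∧ ∀ m ∈ maxElts Γ, a ≤ m → infpt a = infpt m}

/-- `⟨A⟩`, the smallest multicomplex containing `A` (the order ideal generated by `A`). -/
def mcSpan (A : Set (ι → ENat)) : Set (ι → ENat) := {b | ∃ a ∈ A, b ≤ a}

def star (Γ : Set (ι → ENat)) (a : ι → ENat) : Set (ι → ENat) :=
  mcSpan {b | b ∈ facets Γ ∧ a ≤ b}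

def del (Γ : Set (ι → ENat)) (a : ι → ENat) : Set (ι → ENat) :=
  mcSpan {b | b ∈ facets Γ ∧ ¬ a ≤ b}

def link (Γ : Set (ι → ENat)) (a : ι → ENat) : Set (ι → ENat) :=
  mcSpan ((fun b => b - a) '' {b | b ∈ facets Γ ∧ a ≤ b})

/-- view a vector of naturals as a face in `ℕ∞^ι`. -/
def natFace (a : ι → ℕ) : ι → ENat := fun i => (a i : ENat)

/-- `T` is a Stanley set of degree `a`, i.e. `T = a + ⟨m⟩` for some `m ∈ {0,∞}^ι`. -/
def IsStanleySet (a : ι → ℕ) (T : Set (ι → ENat)) : Prop :=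
  ∃ m : ι → ENat, (∀ i, m i = 0 ∨ m i = ⊤) ∧
    T = (fun b => natFace a + b) '' mcSpan {m}

/-- `a ∈ Γ ∩ ℕ^ι` is a shedding face of `Γ`. -/
def IsSheddingFace (Γ : Set (ι → ENat)) (a : ι → ℕ) : Prop :=
  natFace a ∈ Γ ∧
  (∀ b ∈ facets (star Γ (natFace a)),
    IsStanleySet a (mcSpan {b} \ del Γ (natFace a))) ∧
  (∀ b ∈ facets (star Γ (natFace a)), ∀ c ∈ facets (del Γ (natFace a)),
    fpt b ⊆ fpt c → fpt b = fpt c)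

/-- `Γ` is a `k`-decomposable multicomplex. -/
inductive MCKDecomposable (k : ℕ) : Set (ι → ENat) → Prop
  | single (Γ : Set (ι → ENat)) (h : ∃! a, a ∈ facets Γ) : MCKDecomposable k Γ
  | shed (Γ : Set (ι → ENat)) (a : ι → ℕ)
      (ha : IsSheddingFace Γ a)
      (hcard : (fptStar (natFace a)).ncard ≤ k + 1)
      (h1 : MCKDecomposable k (link Γ (natFace a)))
      (h2 : MCKDecomposable k (del Γ (natFace a))) : MCKDecomposable k Γ

/-- `Γ` is a shellable multicomplex. -/
def Shellable (Γ : Set (ι → ENat)) : Prop :=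
  ∃ (r : ℕ) (a : Fin r → (ι → ENat)), Function.Injective a ∧ facets Γ = Set.range a ∧
    ∃ (b : Fin r → (ι → ℕ)) (m : Fin r → (ι → ENat)),
      (∀ i j, m i j = 0 ∨ m i j = ⊤) ∧
      (∀ i : Fin r, mcSpan {a i} \ mcSpan (a '' {j | j < i})
        = (fun c => natFace (b i) + c) '' mcSpan {m i}) ∧
      (∀ i j : Fin r, mcSpan {m i} ⊆ mcSpan {m j} →
        mcSpan {m i} = mcSpan {m j} ∨ j < i)

/-- the join of two multicomplexes. -/
def mcJoin (Γ₁ Γ₂ : Set (ι → ENat)) : Set (ι → ENat) :=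
  {c | ∃ a ∈ Γ₁, ∃ b ∈ Γ₂, c = a + b}

/-- two multicomplexes in `ℕ∞^n` are disjoint. -/
def mcDisjoint {n : ℕ} (Γ₁ Γ₂ : Set (Fin n → ENat)) : Prop :=
  ∃ m : ℕ, 1 < m ∧ m < n ∧
    (∀ a ∈ Γ₁, ∀ i : Fin n, m < (i : ℕ) + 1 → a i = 0) ∧
    (∀ a ∈ Γ₂, ∀ i : Fin n, (i : ℕ) + 1 ≤ m → a i = 0)

/-! ### Simplicial complexes -/

variable {V : Type*} [DecidableEq V]

def IsSimplicialComplex (Δ : Set (Finset V)) : Prop :=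
  ∀ s ∈ Δ, ∀ t ⊆ s, t ∈ Δ

def sFacets (Δ : Set (Finset V)) : Set (Finset V) :=
  {s | s ∈ Δ ∧ ∀ t ∈ Δ, s ⊆ t → s = t}

def sDel (Δ : Set (Finset V)) (s : Finset V) : Set (Finset V) :=
  {t | t ∈ Δ ∧ ¬ s ⊆ t}

def sLink (Δ : Set (Finset V)) (s : Finset V) : Set (Finset V) :=
  {t | t ∈ Δ ∧ t ∩ s = ∅ ∧ t ∪ s ∈ Δ}

/-- `s` is a shedding face of `Δ`. -/
def sShedding (Δ : Set (Finset V)) (s : Finset V) : Prop :=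
  ∀ t ∈ Δ, s ⊆ t → ∀ v ∈ s, ∃ w, w ∉ t ∧ (insert w t).erase v ∈ Δ

/-- `Δ` is a `k`-decomposable simplicial complex. -/
inductive SCKDecomposable (k : ℕ) : Set (Finset V) → Prop
  | simplex (s : Finset V) : SCKDecomposable k {t | t ⊆ s}
  | void : SCKDecomposable k (∅ : Set (Finset V))
  | empty : SCKDecomposable k ({∅} : Set (Finset V))
  | shed (Δ : Set (Finset V)) (s : Finset V) (hs : s ∈ Δ) (hcard : s.card ≤ k + 1)
      (hshed : sShedding Δ s)
      (h1 : SCKDecomposable k (sDel Δ s))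
      (h2 : SCKDecomposable k (sLink Δ s)) : SCKDecomposable k Δ

/-- the join of two simplicial complexes. -/
def sJoin (Δ₁ Δ₂ : Set (Finset V)) : Set (Finset V) :=
  {u | ∃ s ∈ Δ₁, ∃ t ∈ Δ₂, u = s ∪ t}

/-- `a_F`: the `{0,∞}`-vector of a subset `F ⊆ [n]`. -/
def faceOfFinset {n : ℕ} (F : Finset (Fin n)) : Fin n → ENat :=
  fun i => if i ∈ F then (⊤ : ENat) else 0

/-! ### The correspondence between multicomplexes and monomial ideals -/

/-- `I(Γ)`: the monomial ideal associated to a multicomplex `Γ`. -/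
def idealOf (K : Type*) [Field K] {σ : Type*} (Γ : Set (σ → ENat)) :
    Ideal (MvPolynomial σ K) :=
  Ideal.span {p | ∃ a : σ →₀ ℕ, natFace ⇑a ∉ Γ ∧ p = monomial a 1}

/-- `Γ(I)`: the multicomplex associated to a monomial ideal `I`. -/
def gammaOf {K : Type*} [Field K] {σ : Type*} (I : Ideal (MvPolynomial σ K)) :
    Set (σ → ENat) :=
  {c | ∀ b : σ →₀ ℕ, natFace ⇑b ≤ c → (monomial b 1 : MvPolynomial σ K) ∉ I}

/-! ### Polarization -/

/-- the index type of the variables of the polarized ring. -/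
abbrev polarType {n r : ℕ} (g : Fin r → (Fin n →₀ ℕ)) : Type :=
  (j : Fin n) × Fin (Finset.univ.sup fun i => g i j)

/-- the exponent vector of the polarization `v_i` of the generator `u_i = x^(g i)`. -/
def polarExp {n r : ℕ} (g : Fin r → (Fin n →₀ ℕ)) (i : Fin r) : polarType g →₀ ℕ :=
  Finsupp.equivFunOnFinite.symm fun p => if (p.2 : ℕ) < g i p.1 then 1 else 0

/-- the polarization `I^p` of the monomial ideal minimally generated by the `x^(g i)`. -/
def polarIdeal (K : Type*) [Field K] {n r : ℕ} (g : Fin r → (Fin n →₀ ℕ)) :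
    Ideal (MvPolynomial (polarType g) K) :=
  Ideal.span (Set.range fun i => (monomial (polarExp g i) 1 : MvPolynomial (polarType g) K))



section AuxJoin
variable {ι : Type*}

open Classical in
noncomputable def lpart (s : Set ι) (c : ι → ENat) : ι → ENat :=
  fun i => if i ∈ s then c i else 0

/-- a single vector is supported in `s`. -/
def SuppV (s : Set ι) (c : ι → ENat) : Prop := ∀ i ∉ s, c i = 0

/-- all elements of `Γ` are supported in `s`. -/
def Supp (s : Set ι) (Γ : Set (ι → ENat)) : Prop := ∀ c ∈ Γ, SuppV s c

def ZI (c : ι → ENat) : Prop := ∀ i, c i = 0 ∨ c i = ⊤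

section lpart
variable {s : Set ι} {c d x y : ι → ENat}

open Classical

lemma lpart_apply_mem {i : ι} (h : i ∈ s) : lpart s c i = c i := if_pos h
lemma lpart_apply_not_mem {i : ι} (h : i ∉ s) : lpart s c i = 0 := if_neg h

lemma lpart_add_compl (s : Set ι) (c : ι → ENat) : lpart s c + lpart sᶜ c = c := by
  funext i
  by_cases h : i ∈ s <;>
    simp [lpart, h, Pi.add_apply]

lemma lpart_le_self (s : Set ι) (c : ι → ENat) : lpart s c ≤ c := by
  intro i; by_cases h : i ∈ s <;> simp [lpart, h]

lemma lpart_mono (h : c ≤ d) : lpart s c ≤ lpart s d := by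
  intro i; by_cases hi : i ∈ s <;> simp [lpart, hi, h i]

lemma lpart_add (s : Set ι) (c d : ι → ENat) :
    lpart s (c + d) = lpart s c + lpart s d := by
  funext i; by_cases h : i ∈ s <;> simp [lpart, h]

lemma lpart_sub (s : Set ι) (c d : ι → ENat) :
    lpart s (c - d) = lpart s c - lpart s d := by
  funext i; by_cases h : i ∈ s <;> simp [lpart, h]

lemma SuppV.lpart_eq (h : SuppV s c) : lpart s c = c := by
  funext i; by_cases hi : i ∈ s
  · exact lpart_apply_mem hi
  · rw [lpart_apply_not_mem hi, h i hi]

lemma SuppV.lpart_compl (h : SuppV s c) : lpart sᶜ c = 0 := by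
  funext i; by_cases hi : i ∈ sᶜ
  · rw [lpart_apply_mem hi]; exact h i hi
  · exact lpart_apply_not_mem hi

lemma SuppV.lpart_of_compl (h : SuppV sᶜ c) : lpart s c = 0 := by
  funext i; by_cases hi : i ∈ s
  · rw [lpart_apply_mem hi]; exact h i (by simpa using hi)
  · exact lpart_apply_not_mem hi

lemma suppV_lpart (s : Set ι) (c : ι → ENat) : SuppV s (lpart s c) :=
  fun _ hi => lpart_apply_not_mem hi

lemma SuppV.mono_set {t : Set ι} (h : SuppV s c) (hst : s ⊆ t) : SuppV t c :=
  fun i hi => h i fun hs => hi (hst hs)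

lemma SuppV.of_le (h : SuppV s c) (hd : d ≤ c) : SuppV s d := by
  intro i hi
  have := hd i
  rw [h i hi] at this
  exact le_antisymm this zero_le

lemma le_iff_parts (s : Set ι) : c ≤ d ↔ lpart s c ≤ lpart s d ∧ lpart sᶜ c ≤ lpart sᶜ d := by
  constructor
  · exact fun h => ⟨lpart_mono h, lpart_mono h⟩
  · rintro ⟨h1, h2⟩ i
    by_cases hi : i ∈ s
    · have := h1 i; rwa [lpart_apply_mem hi, lpart_apply_mem hi] at this
    · have := h2 i
      rwa [lpart_apply_mem (Set.mem_compl hi), lpart_apply_mem (Set.mem_compl hi)] at this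

lemma decomp_eq_iff (hx : SuppV s x) (hy : SuppV sᶜ y) :
    c = x + y ↔ lpart s c = x ∧ lpart sᶜ c = y := by
  constructor
  · rintro rfl
    rw [lpart_add, lpart_add, hx.lpart_eq, hy.lpart_of_compl, add_zero,
      hx.lpart_compl, hy.lpart_eq, zero_add]
    exact ⟨rfl, rfl⟩
  · rintro ⟨rfl, rfl⟩
    exact (lpart_add_compl s c).symm

lemma le_add_iff_parts (hx : SuppV s x) (hy : SuppV sᶜ y) :
    c ≤ x + y ↔ lpart s c ≤ x ∧ lpart sᶜ c ≤ y := by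
  rw [le_iff_parts s, lpart_add, lpart_add, hx.lpart_eq, hy.lpart_of_compl, add_zero,
    hx.lpart_compl, hy.lpart_eq, zero_add]

lemma mem_mcJoin_iff {S T : Set (ι → ENat)} (hS : Supp s S) (hT : Supp sᶜ T) :
    c ∈ mcJoin S T ↔ lpart s c ∈ S ∧ lpart sᶜ c ∈ T := by
  constructor
  · rintro ⟨x, hx, y, hy, rfl⟩
    obtain ⟨h1, h2⟩ := (decomp_eq_iff (hS x hx) (hT y hy)).mp rfl
    rw [h1, h2]; exact ⟨hx, hy⟩
  · rintro ⟨h1, h2⟩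
    exact ⟨_, h1, _, h2, (lpart_add_compl s c).symm⟩

lemma supp_mcSpan {A : Set (ι → ENat)} (h : Supp s A) : Supp s (mcSpan A) := by
  rintro c ⟨a, ha, hle⟩
  exact (h a ha).of_le hle

lemma mcSpan_join {S T : Set (ι → ENat)} (hS : Supp s S) (hT : Supp sᶜ T) :
    mcSpan (mcJoin S T) = mcJoin (mcSpan S) (mcSpan T) := by
  ext c
  rw [mem_mcJoin_iff (supp_mcSpan hS) (supp_mcSpan hT)]
  constructor
  · rintro ⟨z, hz, hle⟩
    rw [mem_mcJoin_iff hS hT] at hz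
    exact ⟨⟨_, hz.1, lpart_mono hle⟩, ⟨_, hz.2, lpart_mono hle⟩⟩
  · rintro ⟨⟨x, hx, hlx⟩, ⟨y, hy, hly⟩⟩
    refine ⟨x + y, (mem_mcJoin_iff hS hT).mpr ?_, ?_⟩
    · obtain ⟨h1, h2⟩ := (decomp_eq_iff (hS x hx) (hT y hy)).mp rfl
      rw [h1, h2]; exact ⟨hx, hy⟩
    · rw [le_add_iff_parts (hS x hx) (hT y hy)]; exact ⟨hlx, hly⟩

end lpart

section MC
variable {Γ A : Set (ι → ENat)}

lemma maxElts_subset_facets : maxElts Γ ⊆ facets Γ :=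
  fun m hm => ⟨hm.1, fun m' hm' hle => by rw [hm.2 m' hm'.1 hle]⟩

lemma mcSpan_facets (h : IsMulticomplex Γ) : mcSpan (facets Γ) = Γ := by
  ext a
  constructor
  · rintro ⟨b, hb, hle⟩
    exact h.1 b hb.1 a hle
  · intro ha
    obtain ⟨m, hm, hle, hmax⟩ := h.2 a ha
    exact ⟨m, maxElts_subset_facets ⟨hm, hmax⟩, hle⟩

lemma supp_facets {s : Set ι} (hs : Supp s Γ) : Supp s (facets Γ) :=
  fun c hc => hs c hc.1

lemma antichain_maxElts : IsAntichain (· ≤ ·) (maxElts Γ) :=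
  fun _ hx _ hy hne hle => hne (hx.2 _ hy.1 hle)

instance : IsWellOrder ℕ∞ (· < ·) :=
  inferInstance

lemma finite_maxElts [Finite ι] : (maxElts Γ).Finite :=
  antichain_maxElts.finite_of_partiallyWellOrderedOn (Set.isPWO_of_wellQuasiOrderedLE _)

lemma finite_Iic_enat {x : ℕ∞} (hx : x ≠ ⊤) : (Set.Iic x).Finite := by
  lift x to ℕ using hx
  have : Set.Iic (x : ℕ∞) ⊆ (fun j : ℕ => (j : ℕ∞)) '' Set.Iic x := by
    intro y hy
    induction y using ENat.recTopCoe with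
    | top => simp at hy
    | coe j => exact ⟨j, Set.mem_Iic.mpr (by exact_mod_cast Set.mem_Iic.mp hy), rfl⟩
  exact ((Set.finite_Iic x).image _).subset this

lemma infpt_lpart {s : Set ι} (c : ι → ENat) : infpt (lpart s c) = infpt c ∩ s := by
  ext i
  by_cases hi : i ∈ s <;> simp [infpt, lpart, hi]

lemma finite_facets [Finite ι] (h : IsMulticomplex Γ) : (facets Γ).Finite := by
  have hsub : facets Γ ⊆ ⋃ m ∈ maxElts Γ, {a | a ≤ m ∧ infpt a = infpt m} := by
    intro a ha
    obtain ⟨m, hm, hle, hmax⟩ := h.2 a ha.1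
    exact Set.mem_biUnion ⟨hm, hmax⟩ ⟨hle, ha.2 m ⟨hm, hmax⟩ hle⟩
  refine ((finite_maxElts.biUnion fun m _ => ?_)).subset hsub
  classical
  have : {a : ι → ENat | a ≤ m ∧ infpt a = infpt m} ⊆
      Set.pi Set.univ (fun i => if m i = ⊤ then {⊤} else Set.Iic (m i)) := by
    rintro a ⟨hle, hinf⟩ i _
    by_cases hmi : m i = ⊤
    · have : a i = ⊤ := by
        have : i ∈ infpt a := hinf ▸ hmi
        exact this
      simp [hmi, this]
    · simpa [hmi] using hle i
  refine (Set.Finite.pi fun i => ?_).subset this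
  by_cases hmi : m i = ⊤
  · simp [hmi]
  · simp [hmi, finite_Iic_enat hmi]

lemma isMulticomplex_mcSpan (hA : A.Finite) : IsMulticomplex (mcSpan A) := by
  constructor
  · rintro a ⟨g, hg, hle⟩ b hba
    exact ⟨g, hg, hba.trans hle⟩
  · rintro a ⟨g, hg, hle⟩
    obtain ⟨m, hgm, hmax⟩ := hA.exists_le_maximal hg
    refine ⟨m, ⟨m, hmax.1, le_refl m⟩, hle.trans hgm, ?_⟩
    rintro c ⟨g', hg', hcg'⟩ hmc
    exact le_antisymm hmc (hcg'.trans (hmax.2 hg' (hmc.trans hcg')))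

lemma maxElts_mcSpan_subset : maxElts (mcSpan A) ⊆ A := by
  rintro m ⟨⟨g, hg, hle⟩, hmax⟩
  rwa [hmax g ⟨g, hg, le_refl g⟩ hle]

lemma facets_mcSpan_ZI (hA : A.Finite) (hz : ∀ x ∈ A, ZI x) :
    ∀ b ∈ facets (mcSpan A), ZI b := by
  intro b hb
  obtain ⟨M, hM, hle, hmax⟩ := (isMulticomplex_mcSpan hA).2 b hb.1
  have hZI : ZI M := hz M (maxElts_mcSpan_subset ⟨hM, hmax⟩)
  have hinf : infpt b = infpt M := hb.2 M ⟨hM, hmax⟩ hle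
  intro i
  rcases hZI i with h0 | ht
  · left; have := hle i; rw [h0] at this; exact le_antisymm this zero_le
  · right
    have hiM : i ∈ infpt M := ht
    rw [← hinf] at hiM
    exact hiM

end MC

section Join
variable {s : Set ι} {Γa Γb : Set (ι → ENat)} {A : ι → ENat}

lemma mcJoin_comm (S T : Set (ι → ENat)) : mcJoin S T = mcJoin T S := by
  ext c
  constructor <;> rintro ⟨x, hx, y, hy, rfl⟩ <;> exact ⟨y, hy, x, hx, add_comm x y⟩

lemma le_lpart_iff (hA : SuppV s A) {c : ι → ENat} : A ≤ c ↔ A ≤ lpart s c :=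
  ⟨fun h => by rw [← hA.lpart_eq]; exact lpart_mono h,
   fun h => h.trans (lpart_le_self s c)⟩

lemma maxElts_join (ha : IsMulticomplex Γa) (hb : IsMulticomplex Γb)
    (Sa : Supp s Γa) (Sb : Supp sᶜ Γb) :
    maxElts (mcJoin Γa Γb) = {c | lpart s c ∈ maxElts Γa ∧ lpart sᶜ c ∈ maxElts Γb} := by
  ext c
  constructor
  · rintro ⟨hc, hmax⟩
    obtain ⟨h1, h2⟩ := (mem_mcJoin_iff Sa Sb).mp hc
    constructor
    · refine ⟨h1, fun d hd hled => ?_⟩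
      have hmem : d + lpart sᶜ c ∈ mcJoin Γa Γb := ⟨d, hd, _, h2, rfl⟩
      have hle : c ≤ d + lpart sᶜ c :=
        (le_add_iff_parts (Sa d hd) (suppV_lpart _ _)).mpr ⟨hled, le_refl _⟩
      exact ((decomp_eq_iff (Sa d hd) (suppV_lpart _ _)).mp (hmax _ hmem hle)).1
    · refine ⟨h2, fun d hd hled => ?_⟩
      have hmem : lpart s c + d ∈ mcJoin Γa Γb := ⟨_, h1, d, hd, rfl⟩
      have hle : c ≤ lpart s c + d :=
        (le_add_iff_parts (suppV_lpart _ _) (Sb d hd)).mpr ⟨le_refl _, hled⟩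
      exact ((decomp_eq_iff (suppV_lpart _ _) (Sb d hd)).mp (hmax _ hmem hle)).2
  · rintro ⟨⟨h1, hm1⟩, ⟨h2, hm2⟩⟩
    refine ⟨(mem_mcJoin_iff Sa Sb).mpr ⟨h1, h2⟩, fun d hd hled => ?_⟩
    obtain ⟨hd1, hd2⟩ := (mem_mcJoin_iff Sa Sb).mp hd
    calc c = lpart s c + lpart sᶜ c := (lpart_add_compl s c).symm
      _ = lpart s d + lpart sᶜ d := by
          rw [hm1 _ hd1 (lpart_mono hled), hm2 _ hd2 (lpart_mono hled)]
      _ = d := lpart_add_compl s d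

lemma facets_join (ha : IsMulticomplex Γa) (hb : IsMulticomplex Γb)
    (Sa : Supp s Γa) (Sb : Supp sᶜ Γb) :
    facets (mcJoin Γa Γb) = {c | lpart s c ∈ facets Γa ∧ lpart sᶜ c ∈ facets Γb} := by
  ext c
  constructor
  · rintro ⟨hc, hfac⟩
    obtain ⟨h1, h2⟩ := (mem_mcJoin_iff Sa Sb).mp hc
    refine ⟨⟨h1, fun m1 hm1 hle1 => ?_⟩, ⟨h2, fun m2 hm2 hle2 => ?_⟩⟩
    · obtain ⟨m2, hm2', hle2, hmax2⟩ := hb.2 _ h2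
      obtain ⟨e1, e2⟩ := (decomp_eq_iff (Sa _ hm1.1) (Sb _ hm2')).mp rfl
      have hM : m1 + m2 ∈ maxElts (mcJoin Γa Γb) := by
        rw [maxElts_join ha hb Sa Sb]
        refine ⟨?_, ?_⟩
        · rw [e1]; exact hm1
        · rw [e2]; exact ⟨hm2', hmax2⟩
      have hcle : c ≤ m1 + m2 := (le_add_iff_parts (Sa _ hm1.1) (Sb _ hm2')).mpr ⟨hle1, hle2⟩
      have hinf := hfac _ hM hcle
      have h' : infpt (lpart s c) = infpt (lpart s (m1 + m2)) := by
        rw [infpt_lpart, infpt_lpart, hinf]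
      rwa [e1] at h'
    · obtain ⟨m1, hm1', hle1, hmax1⟩ := ha.2 _ h1
      obtain ⟨e1, e2⟩ := (decomp_eq_iff (Sa _ hm1') (Sb _ hm2.1)).mp rfl
      have hM : m1 + m2 ∈ maxElts (mcJoin Γa Γb) := by
        rw [maxElts_join ha hb Sa Sb]
        refine ⟨?_, ?_⟩
        · rw [e1]; exact ⟨hm1', hmax1⟩
        · rw [e2]; exact hm2
      have hcle : c ≤ m1 + m2 := (le_add_iff_parts (Sa _ hm1') (Sb _ hm2.1)).mpr ⟨hle1, hle2⟩
      have hinf := hfac _ hM hcle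
      have h' : infpt (lpart sᶜ c) = infpt (lpart sᶜ (m1 + m2)) := by
        rw [infpt_lpart, infpt_lpart, hinf]
      rwa [e2] at h'
  · rintro ⟨⟨h1, hf1⟩, ⟨h2, hf2⟩⟩
    refine ⟨(mem_mcJoin_iff Sa Sb).mpr ⟨h1, h2⟩, fun M hM hle => ?_⟩
    rw [maxElts_join ha hb Sa Sb] at hM
    have e1 := hf1 _ hM.1 (lpart_mono hle)
    have e2 := hf2 _ hM.2 (lpart_mono hle)
    have q1 : infpt c ∩ s = infpt M ∩ s := by rw [← infpt_lpart, ← infpt_lpart, e1]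
    have q2 : infpt c ∩ sᶜ = infpt M ∩ sᶜ := by rw [← infpt_lpart, ← infpt_lpart, e2]
    ext i
    by_cases hi : i ∈ s
    · have hh := Set.ext_iff.mp q1 i
      simpa [hi] using hh
    · have hh := Set.ext_iff.mp q2 i
      simpa [hi] using hh

lemma star_join (ha : IsMulticomplex Γa) (hb : IsMulticomplex Γb)
    (Sa : Supp s Γa) (Sb : Supp sᶜ Γb) (hA : SuppV s A) :
    star (mcJoin Γa Γb) A = mcJoin (star Γa A) Γb := by
  have SFa : Supp s {x | x ∈ facets Γa ∧ A ≤ x} := fun c hc => supp_facets Sa c hc.1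
  have SFb : Supp sᶜ (facets Γb) := supp_facets Sb
  have hgen : {b | b ∈ facets (mcJoin Γa Γb) ∧ A ≤ b}
      = mcJoin {x | x ∈ facets Γa ∧ A ≤ x} (facets Γb) := by
    ext b
    rw [mem_mcJoin_iff SFa SFb, Set.mem_setOf_eq, facets_join ha hb Sa Sb]
    constructor
    · rintro ⟨⟨hb1, hb2⟩, hAb⟩; exact ⟨⟨hb1, (le_lpart_iff hA).mp hAb⟩, hb2⟩
    · rintro ⟨⟨hb1, hAb⟩, hb2⟩; exact ⟨⟨hb1, hb2⟩, (le_lpart_iff hA).mpr hAb⟩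
  rw [star, hgen, mcSpan_join SFa SFb, mcSpan_facets hb]
  rfl

lemma del_join (ha : IsMulticomplex Γa) (hb : IsMulticomplex Γb)
    (Sa : Supp s Γa) (Sb : Supp sᶜ Γb) (hA : SuppV s A) :
    del (mcJoin Γa Γb) A = mcJoin (del Γa A) Γb := by
  have SFa : Supp s {x | x ∈ facets Γa ∧ ¬ A ≤ x} := fun c hc => supp_facets Sa c hc.1
  have SFb : Supp sᶜ (facets Γb) := supp_facets Sb
  have hgen : {b | b ∈ facets (mcJoin Γa Γb) ∧ ¬ A ≤ b}
      = mcJoin {x | x ∈ facets Γa ∧ ¬ A ≤ x} (facets Γb) := by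
    ext b
    rw [mem_mcJoin_iff SFa SFb, Set.mem_setOf_eq, facets_join ha hb Sa Sb]
    constructor
    · rintro ⟨⟨hb1, hb2⟩, hAb⟩; exact ⟨⟨hb1, fun h => hAb ((le_lpart_iff hA).mpr h)⟩, hb2⟩
    · rintro ⟨⟨hb1, hAb⟩, hb2⟩; exact ⟨⟨hb1, hb2⟩, fun h => hAb ((le_lpart_iff hA).mp h)⟩
  rw [del, hgen, mcSpan_join SFa SFb, mcSpan_facets hb]
  rfl

lemma SuppV.sub {x : ι → ENat} (hx : SuppV s x) (y : ι → ENat) : SuppV s (x - y) := by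
  intro i hi
  show x i - y i = 0
  rw [hx i hi, zero_tsub]

lemma link_join (ha : IsMulticomplex Γa) (hb : IsMulticomplex Γb)
    (Sa : Supp s Γa) (Sb : Supp sᶜ Γb) (hA : SuppV s A) :
    link (mcJoin Γa Γb) A = mcJoin (link Γa A) Γb := by
  have SFa : Supp s ((fun b => b - A) '' {x | x ∈ facets Γa ∧ A ≤ x}) := by
    rintro c ⟨x, hx, rfl⟩
    exact (supp_facets Sa x hx.1).sub A
  have SFb : Supp sᶜ (facets Γb) := supp_facets Sb
  have hgen : (fun b => b - A) '' {b | b ∈ facets (mcJoin Γa Γb) ∧ A ≤ b}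
      = mcJoin ((fun b => b - A) '' {x | x ∈ facets Γa ∧ A ≤ x}) (facets Γb) := by
    ext d
    rw [mem_mcJoin_iff SFa SFb]
    constructor
    · rintro ⟨b, ⟨hbf, hAb⟩, rfl⟩
      rw [facets_join ha hb Sa Sb] at hbf
      constructor
      · refine ⟨lpart s b, ⟨hbf.1, (le_lpart_iff hA).mp hAb⟩, ?_⟩
        rw [lpart_sub, hA.lpart_eq]
      · have : lpart sᶜ (b - A) = lpart sᶜ b := by
          rw [lpart_sub, hA.lpart_compl, tsub_zero]
        rw [this]; exact hbf.2
    · rintro ⟨⟨x, ⟨hxf, hAx⟩, hxd⟩, hd2⟩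
      refine ⟨x + lpart sᶜ d, ⟨?_, ?_⟩, ?_⟩
      · rw [facets_join ha hb Sa Sb]
        obtain ⟨e1, e2⟩ := (decomp_eq_iff (supp_facets Sa x hxf) (suppV_lpart _ _)).mp rfl
        constructor
        · rw [e1]; exact hxf
        · rw [e2]; exact hd2
      · exact (le_lpart_iff hA).mpr (by
          obtain ⟨e1, _⟩ := (decomp_eq_iff (supp_facets Sa x hxf) (suppV_lpart _ _)).mp rfl
          rw [e1]; exact hAx)
      · funext i
        by_cases hi : i ∈ s
        · have hdi : lpart sᶜ d i = 0 := lpart_apply_not_mem (by simpa using hi)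
          have e : lpart s d i = x i - A i := congrFun hxd.symm i
          show x i + lpart sᶜ d i - A i = d i
          rw [hdi, add_zero, ← lpart_apply_mem hi (c := d), e]
        · have hxi : x i = 0 := supp_facets Sa x hxf i hi
          have hAi : A i = 0 := hA i hi
          show x i + lpart sᶜ d i - A i = d i
          rw [hxi, hAi, zero_add, tsub_zero, lpart_apply_mem (Set.mem_compl hi)]
  rw [link, hgen, mcSpan_join SFa SFb, mcSpan_facets hb]
  rfl

end Join

section Shed
variable {s : Set ι} {Γa Γb : Set (ι → ENat)} {A : ι → ENat}

lemma fpt_lpart_subset {b c : ι → ENat} (h : fpt b ⊆ fpt c) :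
    fpt (lpart s b) ⊆ fpt (lpart s c) := by
  intro i hi
  by_cases his : i ∈ s
  · have hb : b i ≠ ⊤ := by rwa [fpt, Set.mem_setOf_eq, lpart_apply_mem his] at hi
    have hc : c i ≠ ⊤ := h hb
    rwa [fpt, Set.mem_setOf_eq, lpart_apply_mem his]
  · rw [fpt, Set.mem_setOf_eq, lpart_apply_not_mem his]
    simp

lemma fpt_eq_of_parts {b c : ι → ENat} (h1 : fpt (lpart s b) = fpt (lpart s c))
    (h2 : fpt (lpart sᶜ b) = fpt (lpart sᶜ c)) : fpt b = fpt c := by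
  ext i
  by_cases his : i ∈ s
  · have hh := Set.ext_iff.mp h1 i
    rwa [fpt, fpt, Set.mem_setOf_eq, Set.mem_setOf_eq, lpart_apply_mem his,
      lpart_apply_mem his] at hh
  · have hh := Set.ext_iff.mp h2 i
    rwa [fpt, fpt, Set.mem_setOf_eq, Set.mem_setOf_eq,
      lpart_apply_mem (Set.mem_compl his), lpart_apply_mem (Set.mem_compl his)] at hh

lemma fpt_eq_of_ZI {Γ : Set (ι → ENat)} (h : IsMulticomplex Γ) {b c : ι → ENat}
    (hb : b ∈ facets Γ) (hc : c ∈ facets Γ) (hzb : ZI b) (hzc : ZI c)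
    (hsub : fpt b ⊆ fpt c) : fpt b = fpt c := by
  have hcb : c ≤ b := by
    intro i
    rcases hzc i with h0 | ht
    · rw [h0]; exact zero_le
    · have hbt : b i = ⊤ := by
        by_contra hbt
        exact (hsub hbt) ht
      rw [hbt]; exact le_top
  obtain ⟨M, hM, hle, hmax⟩ := h.2 b hb.1
  have e1 : infpt b = infpt M := hb.2 M ⟨hM, hmax⟩ hle
  have e2 : infpt c = infpt M := hc.2 M ⟨hM, hmax⟩ (hcb.trans hle)
  ext i
  simp only [fpt, Set.mem_setOf_eq]
  constructor
  · intro hbi hci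
    apply hbi
    have hmem : i ∈ infpt c := hci
    rw [e2, ← e1] at hmem
    exact hmem
  · intro hci hbi
    apply hci
    have hmem : i ∈ infpt b := hbi
    rw [e1, ← e2] at hmem
    exact hmem

lemma SuppV.add {x y : ι → ENat} (hx : SuppV s x) (hy : SuppV s y) : SuppV s (x + y) := by
  intro i hi
  show x i + y i = 0
  rw [hx i hi, hy i hi, add_zero]

lemma isStanleySet_join {a : ι → ℕ} (hA : SuppV s (natFace a)) {T : Set (ι → ENat)}
    {g : ι → ENat} (hT : IsStanleySet a T) (hTs : Supp s T) (hg : ZI g) (hgs : SuppV sᶜ g) :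
    IsStanleySet a {d | lpart s d ∈ T ∧ lpart sᶜ d ≤ g} := by
  obtain ⟨μ, hμZI, rfl⟩ := hT
  have hμs : SuppV s μ := by
    have hmem : natFace a + μ ∈ (fun b => natFace a + b) '' mcSpan {μ} :=
      ⟨μ, ⟨μ, rfl, le_refl μ⟩, rfl⟩
    have h2 := hTs _ hmem
    intro i hi
    exact (add_eq_zero.mp (h2 i hi)).2
  refine ⟨μ + g, ?_, ?_⟩
  · intro i
    rcases hμZI i with h0 | ht
    · rcases hg i with g0 | gt
      · left; show μ i + g i = 0; simp [h0, g0]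
      · right; show μ i + g i = ⊤; simp [gt]
    · right; show μ i + g i = ⊤; simp [ht]
  · ext d
    simp only [Set.mem_setOf_eq]
    constructor
    · rintro ⟨⟨x, hxmem, hxd⟩, hd2⟩
      obtain ⟨x', hx', hxle⟩ := hxmem
      rw [Set.mem_singleton_iff] at hx'
      rw [hx'] at hxle
      clear hx'
      have hxs : SuppV s x := hμs.of_le hxle
      have hAx : SuppV s (natFace a + x) := hA.add hxs
      refine ⟨x + lpart sᶜ d, ⟨μ + g, rfl, ?_⟩, ?_⟩
      · obtain ⟨e1, e2⟩ := (decomp_eq_iff hxs (suppV_lpart sᶜ d)).mp rfl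
        rw [le_add_iff_parts hμs hgs, e1, e2]
        exact ⟨hxle, hd2⟩
      · have hd : d = (natFace a + x) + lpart sᶜ d :=
          (decomp_eq_iff hAx (suppV_lpart sᶜ d)).mpr ⟨hxd.symm, rfl⟩
        show natFace a + (x + lpart sᶜ d) = d
        rw [← add_assoc]
        exact hd.symm
    · rintro ⟨y, hymem, hyd⟩
      obtain ⟨y', hy', hyle⟩ := hymem
      rw [Set.mem_singleton_iff] at hy'
      rw [hy'] at hyle
      clear hy'
      rw [le_add_iff_parts hμs hgs] at hyle
      have e0 : lpart s d = natFace a + lpart s y := by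
        rw [← hyd, lpart_add, hA.lpart_eq]
      have e1 : lpart sᶜ d = lpart sᶜ y := by
        rw [← hyd, lpart_add, hA.lpart_compl, zero_add]
      exact ⟨⟨lpart s y, ⟨μ, rfl, hyle.1⟩, e0.symm⟩, e1 ▸ hyle.2⟩

lemma supp_sep_facets (Sa : Supp s Γa) (P : (ι → ENat) → Prop) :
    Supp s {x | x ∈ facets Γa ∧ P x} := fun c hc => supp_facets Sa c hc.1

lemma supp_star (Sa : Supp s Γa) (A : ι → ENat) : Supp s (star Γa A) :=
  supp_mcSpan (supp_sep_facets Sa _)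

lemma supp_del (Sa : Supp s Γa) (A : ι → ENat) : Supp s (del Γa A) :=
  supp_mcSpan (supp_sep_facets Sa _)

lemma supp_link (Sa : Supp s Γa) (A : ι → ENat) : Supp s (link Γa A) := by
  refine supp_mcSpan ?_
  rintro c ⟨x, hx, rfl⟩
  exact (supp_facets Sa x hx.1).sub A

lemma isMulticomplex_star [Finite ι] (ha : IsMulticomplex Γa) (A : ι → ENat) :
    IsMulticomplex (star Γa A) :=
  isMulticomplex_mcSpan ((finite_facets ha).subset fun _ hx => hx.1)

lemma isMulticomplex_del [Finite ι] (ha : IsMulticomplex Γa) (A : ι → ENat) :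
    IsMulticomplex (del Γa A) :=
  isMulticomplex_mcSpan ((finite_facets ha).subset fun _ hx => hx.1)

lemma isMulticomplex_link [Finite ι] (ha : IsMulticomplex Γa) (A : ι → ENat) :
    IsMulticomplex (link Γa A) :=
  isMulticomplex_mcSpan (((finite_facets ha).subset fun _ hx => hx.1).image _)

lemma shed_join [Finite ι] (ha : IsMulticomplex Γa) (hb : IsMulticomplex Γb)
    (Sa : Supp s Γa) (Sb : Supp sᶜ Γb) (hzb : ∀ c ∈ facets Γb, ZI c)
    (h0 : (0 : ι → ENat) ∈ Γb) {a : ι → ℕ} (hsh : IsSheddingFace Γa a) :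
    IsSheddingFace (mcJoin Γa Γb) a := by
  obtain ⟨hmem, hst, hfp⟩ := hsh
  have hA : SuppV s (natFace a) := Sa _ hmem
  have hstarJ := star_join ha hb Sa Sb hA
  have hdelJ := del_join ha hb Sa Sb hA
  refine ⟨⟨natFace a, hmem, 0, h0, (add_zero _).symm⟩, ?_, ?_⟩
  · intro b' hb'
    rw [hstarJ, facets_join (isMulticomplex_star ha _) hb (supp_star Sa _) Sb] at hb'
    obtain ⟨hb1, hb2⟩ := hb'
    have hset : mcSpan {b'} \ del (mcJoin Γa Γb) (natFace a)
        = {d | lpart s d ∈ (mcSpan {lpart s b'} \ del Γa (natFace a))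
            ∧ lpart sᶜ d ≤ lpart sᶜ b'} := by
      ext d
      simp only [Set.mem_diff, Set.mem_setOf_eq]
      rw [hdelJ, mem_mcJoin_iff (supp_del Sa _) Sb]
      constructor
      · rintro ⟨⟨z, rfl, hdz⟩, hnd⟩
        rw [le_iff_parts s] at hdz
        refine ⟨⟨⟨lpart s z, rfl, hdz.1⟩, fun hdel => hnd ⟨hdel, ?_⟩⟩, hdz.2⟩
        exact hb.1 _ hb2.1 _ hdz.2
      · rintro ⟨⟨⟨z, rfl, hdz⟩, hnd⟩, hd2⟩
        refine ⟨⟨b', rfl, ?_⟩, fun hmem' => hnd hmem'.1⟩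
        rw [le_iff_parts s]
        exact ⟨hdz, hd2⟩
    rw [hset]
    refine isStanleySet_join hA (hst _ hb1) ?_ (hzb _ hb2) (Sb _ hb2.1)
    rintro c ⟨⟨z, rfl, hcz⟩, _⟩
    exact (suppV_lpart s b').of_le hcz
  · intro b' hb' c' hc' hsub
    rw [hstarJ, facets_join (isMulticomplex_star ha _) hb (supp_star Sa _) Sb] at hb'
    rw [hdelJ, facets_join (isMulticomplex_del ha _) hb (supp_del Sa _) Sb] at hc'
    exact fpt_eq_of_parts (hfp _ hb'.1 _ hc'.1 (fpt_lpart_subset hsub))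
      (fpt_eq_of_ZI hb hb'.2 hc'.2 (hzb _ hb'.2) (hzb _ hc'.2) (fpt_lpart_subset hsub))

end Shed

section Main
variable {Γ Γa Γb : Set (ι → ENat)}

lemma exists_facets_singleton (h : IsMulticomplex Γ) (hu : ∃! x, x ∈ facets Γ) :
    ∃ f, facets Γ = {f} ∧ ZI f := by
  obtain ⟨f, hf, huniq⟩ := hu
  refine ⟨f, Set.eq_singleton_iff_unique_mem.mpr ⟨hf, huniq⟩, ?_⟩
  intro i
  by_contra hcon
  push_neg at hcon
  obtain ⟨h0, ht⟩ := hcon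
  classical
  set f' := Function.update f i 0 with hf'def
  have hle : f' ≤ f := by
    intro j
    by_cases hj : j = i
    · subst hj; simp [f', Function.update_self]
    · simp [f', Function.update_of_ne hj]
  have hf'Γ : f' ∈ Γ := h.1 f hf.1 f' hle
  have hinf : infpt f' = infpt f := by
    ext j
    by_cases hj : j = i
    · subst hj
      simp only [infpt, Set.mem_setOf_eq, f', Function.update_self]
      constructor
      · intro h'; exact absurd h'.symm (by simp)
      · intro h'; exact absurd h' ht
    · simp [infpt, f', Function.update_of_ne hj]
  have hfac : f' ∈ facets Γ := by
    refine ⟨hf'Γ, fun m hm hlem => ?_⟩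
    have hmf : m = f := huniq m (maxElts_subset_facets hm)
    rw [hmf]
    exact hinf
  have heq : f' = f := huniq _ hfac
  apply h0
  rw [← heq]
  simp [f', Function.update_self]

lemma mck_exists_mem {k : ℕ} (h : MCKDecomposable k Γ) : ∃ x, x ∈ Γ := by
  cases h with
  | single Γ hu =>
    obtain ⟨a, ha, _⟩ := hu
    exact ⟨a, ha.1⟩
  | shed Γ a ha hcard h1 h2 => exact ⟨natFace a, ha.1⟩

lemma zero_mem_mc (h : IsMulticomplex Γ) (hx : ∃ x, x ∈ Γ) : (0 : ι → ENat) ∈ Γ := by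
  obtain ⟨x, hx⟩ := hx
  exact h.1 x hx 0 (fun i => zero_le)

lemma zi_facets_del [Finite ι] (hb : IsMulticomplex Γb) (hzb : ∀ c ∈ facets Γb, ZI c)
    (A : ι → ENat) : ∀ c ∈ facets (del Γb A), ZI c :=
  facets_mcSpan_ZI ((finite_facets hb).subset fun _ hx => hx.1) (fun x hx => hzb x hx.1)

lemma zi_facets_link [Finite ι] (hb : IsMulticomplex Γb) (hzb : ∀ c ∈ facets Γb, ZI c)
    (b : ι → ℕ) : ∀ c ∈ facets (link Γb (natFace b)), ZI c := by
  refine facets_mcSpan_ZI (((finite_facets hb).subset fun _ hx => hx.1).image _) ?_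
  rintro c ⟨x, ⟨hxf, hxle⟩, rfl⟩
  intro i
  rcases hzb x hxf i with h0 | ht
  · left; show x i - natFace b i = 0; rw [h0, zero_tsub]
  · right; show x i - natFace b i = ⊤
    rw [ht]
    exact ENat.top_sub_coe (b i)

lemma join_decomp [Finite ι] (k : ℕ) (s : Set ι) :
    ∀ Γa : Set (ι → ENat), MCKDecomposable k Γa →
    ∀ Γb : Set (ι → ENat), MCKDecomposable k Γb →
      IsMulticomplex Γa → IsMulticomplex Γb → Supp s Γa → Supp sᶜ Γb →
      (∀ c ∈ facets Γb, ZI c) → MCKDecomposable k (mcJoin Γa Γb) := by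
  intro Γa hda
  induction hda with
  | single Γa hu =>
    intro Γb hdb
    induction hdb with
    | single Γb hub =>
      intro h1 h2 Sa Sb hzb
      obtain ⟨f, hfs, hzf⟩ := exists_facets_singleton h1 hu
      obtain ⟨g, hgs, hzg⟩ := exists_facets_singleton h2 hub
      have hfΓ : f ∈ facets Γa := by rw [hfs]; rfl
      have hgΓ : g ∈ facets Γb := by rw [hgs]; rfl
      have hSf : SuppV s f := Sa f hfΓ.1
      have hSg : SuppV sᶜ g := Sb g hgΓ.1
      obtain ⟨e1, e2⟩ := (decomp_eq_iff hSf hSg).mp rfl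
      apply MCKDecomposable.single
      refine ⟨f + g, ?_, ?_⟩
      · rw [facets_join h1 h2 Sa Sb]
        exact ⟨by rw [e1]; exact hfΓ, by rw [e2]; exact hgΓ⟩
      · intro c hc
        rw [facets_join h1 h2 Sa Sb] at hc
        have q1 : lpart s c = f := by
          have := hc.1; rw [hfs] at this; exact Set.mem_singleton_iff.mp this
        have q2 : lpart sᶜ c = g := by
          have := hc.2; rw [hgs] at this; exact Set.mem_singleton_iff.mp this
        exact (decomp_eq_iff hSf hSg).mpr ⟨q1, q2⟩
    | shed Γb b hsb hcb hlb hdb ihl ihd =>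
      intro h1 h2 Sa Sb hzb
      obtain ⟨f, hfs, hzf⟩ := exists_facets_singleton h1 hu
      have hfΓ : f ∈ facets Γa := by rw [hfs]; rfl
      have hza : ∀ c ∈ facets Γa, ZI c := by
        intro c hc
        rw [hfs] at hc
        rw [Set.mem_singleton_iff.mp hc]
        exact hzf
      have Sa' : Supp sᶜᶜ Γa := by rw [compl_compl]; exact Sa
      have h0a : (0 : ι → ENat) ∈ Γa := zero_mem_mc h1 ⟨f, hfΓ.1⟩
      have hB : SuppV sᶜ (natFace b) := Sb _ hsb.1
      have hshed : IsSheddingFace (mcJoin Γa Γb) b := by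
        rw [mcJoin_comm]
        exact shed_join (s := sᶜ) h2 h1 Sb Sa' hza h0a hsb
      refine MCKDecomposable.shed _ b hshed hcb ?_ ?_
      · have hlnk : link (mcJoin Γa Γb) (natFace b) = mcJoin Γa (link Γb (natFace b)) := by
          rw [mcJoin_comm, link_join (s := sᶜ) h2 h1 Sb Sa' hB, mcJoin_comm]
        rw [hlnk]
        exact ihl h1 (isMulticomplex_link h2 _) Sa (supp_link Sb _) (zi_facets_link h2 hzb b)
      · have hdl : del (mcJoin Γa Γb) (natFace b) = mcJoin Γa (del Γb (natFace b)) := by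
          rw [mcJoin_comm, del_join (s := sᶜ) h2 h1 Sb Sa' hB, mcJoin_comm]
        rw [hdl]
        exact ihd h1 (isMulticomplex_del h2 _) Sa (supp_del Sb _) (zi_facets_del h2 hzb _)
  | shed Γa a hsa hca hla hdda ihl ihd =>
    intro Γb hdb h1 h2 Sa Sb hzb
    have hA : SuppV s (natFace a) := Sa _ hsa.1
    have h0b : (0 : ι → ENat) ∈ Γb := zero_mem_mc h2 (mck_exists_mem hdb)
    refine MCKDecomposable.shed _ a (shed_join h1 h2 Sa Sb hzb h0b hsa) hca ?_ ?_
    · rw [link_join h1 h2 Sa Sb hA]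
      exact ihl _ hdb (isMulticomplex_link h1 _) h2 (supp_link Sa _) Sb hzb
    · rw [del_join h1 h2 Sa Sb hA]
      exact ihd _ hdb (isMulticomplex_del h1 _) h2 (supp_del Sa _) Sb hzb

end Main
end AuxJoin


/-- the join of two disjoint `k`-decomposable multicomplexes, the second of
which has all facets in `{0,∞}^n`, is `k`-decomposable. -/
theorem mcKDecomposable_join {n : ℕ} (k : ℕ) (Γ₁ Γ₂ : Set (Fin n → ENat))
    (h1 : IsMulticomplex Γ₁) (h2 : IsMulticomplex Γ₂) (hd : mcDisjoint Γ₁ Γ₂)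
    (hF : ∀ b ∈ facets Γ₂, ∀ i, b i = 0 ∨ b i = ⊤)
    (hd1 : MCKDecomposable k Γ₁) (hd2 : MCKDecomposable k Γ₂) :
    MCKDecomposable k (mcJoin Γ₁ Γ₂) := by
  obtain ⟨m, _hm1, _hmn, hG1, hG2⟩ := hd
  have Sa : Supp {i : Fin n | (i : ℕ) < m} Γ₁ := by
    intro c hc i hi
    exact hG1 c hc i (Nat.lt_succ_of_le (Nat.le_of_not_lt (by simpa using hi)))
  have Sb : Supp {i : Fin n | (i : ℕ) < m}ᶜ Γ₂ := by
    intro c hc i hi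
    have his : (i : ℕ) < m := by
      by_contra h'
      exact hi (by simpa using h')
    exact hG2 c hc i (Nat.succ_le_of_lt his)
  exact join_decomp k {i : Fin n | (i : ℕ) < m} Γ₁ hd1 Γ₂ hd2 h1 h2 Sa Sb hF

end Arxiv1703
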